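/- arXiv:1509.00299 — 6 statements merged into one kernel-verified Lean document; each statement's English description precedes it below -/
import Mathlib

section
/- Let a, b be reals with 1/2 < a < 1 and b > 1/2. Then as h → ∞, the series S(h) := Σ_{j=0}^∞ (j+1)^(−a) (j+h+1)^(−b) satisfies S(h) ~ c(a,b) · h^(1−(a+b)), i.e., S(h) / h^(1−(a+b)) → c(a,b), where c(a,b) = ∫₀^∞ x^(−a)(x+1)^(−b) dx. -/
/-!
With `f x = x ^ (-a) * (x + 1) ^ (-b)` one has
`(j + 1) ^ (-a) * (j + h + 1) ^ (-b) = h ^ (-(a + b)) * f ((j + 1) / h)`, so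
`S(h) / h ^ (1 - (a + b))` is the Riemann sum `h⁻¹ * ∑ f ((j + 1) / h)` of `f`. The summand is
antitone in `j`, so the integral test squeezes this between `∫_{1/h}^∞ f` and
`∫_0^∞ f + h ^ (a - 1)`, and both bounds tend to `∫_0^∞ f`.
-/

open MeasureTheory Set Filter Topology Real

theorem tendsto_setIntegral_Ioi_nhdsGT {E : Type*} [NormedAddCommGroup E] [NormedSpace ℝ E]
    {f : ℝ → E} {a : ℝ} (hf : IntegrableOn f (Ioi a)) :
    Tendsto (fun δ => ∫ x in Ioi δ, f x) (𝓝[>] a) (𝓝 (∫ x in Ioi a, f x)) := by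
  have hprim : Tendsto (fun δ => ∫ x in a..δ, f x) (𝓝[>] a) (𝓝 0) := by
    have hcont : ContinuousWithinAt (fun δ => ∫ x in a..δ, f x) (Icc a (a + 1)) a := by
      refine intervalIntegral.continuousWithinAt_primitive (measure_singleton a) ?_
      rw [min_self, max_eq_right (by linarith)]
      exact (intervalIntegrable_iff_integrableOn_Ioc_of_le (by linarith)).mpr
        (hf.mono_set Ioc_subset_Ioi_self)
    simpa using hcont.tendsto.mono_left (nhdsWithin_le_of_mem (Icc_mem_nhdsGT (by linarith)))
  refine (tendsto_const_nhds.sub hprim).congr' ?_ |>.trans (by rw [sub_zero])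
  filter_upwards [self_mem_nhdsWithin] with δ hδ
  rw [← intervalIntegral.integral_Ioi_sub_Ioi hf hδ.le, sub_sub_cancel]

theorem setIntegral_Ioi_comp_add_right {E : Type*} [NormedAddCommGroup E] [NormedSpace ℝ E]
    (g : ℝ → E) (a c : ℝ) : ∫ x in Ioi a, g (x + c) = ∫ x in Ioi (a + c), g x := by
  rw [← integral_indicator measurableSet_Ioi, ← integral_indicator measurableSet_Ioi]
  conv_rhs => rw [← integral_add_right_eq_self _ c]
  congr 1
  ext x
  simp only [indicator, mem_Ioi, add_lt_add_iff_right]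

-- `∫ x in Ioi 0, betaIntegrand a b x = B(1 - a, a + b - 1)`
noncomputable def betaIntegrand (a b x : ℝ) : ℝ := x ^ (-a) * (x + 1) ^ (-b)

noncomputable def shiftedTerm (a b h x : ℝ) : ℝ := (x + 1) ^ (-a) * (x + h + 1) ^ (-b)

section

variable {a b h : ℝ}

theorem integrableOn_betaIntegrand (ha1 : a < 1) (hab : 1 < a + b) :
    IntegrableOn (betaIntegrand a b) (Ioi 0) := by
  have hb : 0 ≤ b := by linarith
  have hmeas : AEStronglyMeasurable (betaIntegrand a b) := by
    unfold betaIntegrand; fun_prop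
  rw [← Ioc_union_Ioi_eq_Ioi zero_le_one]
  refine IntegrableOn.union ?_ ?_
  · have hpow : IntegrableOn (fun x : ℝ => x ^ (-a)) (Ioc 0 1) :=
      (intervalIntegrable_iff_integrableOn_Ioc_of_le zero_le_one).mp
        (intervalIntegral.intervalIntegrable_rpow' (by linarith))
    refine hpow.mono' hmeas.restrict ((ae_restrict_iff' measurableSet_Ioc).mpr ?_)
    refine Eventually.of_forall fun x ⟨hx, _⟩ => ?_
    rw [norm_of_nonneg (by unfold betaIntegrand; positivity)]
    exact mul_le_of_le_one_right (by positivity)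
      (rpow_le_one_of_one_le_of_nonpos (by linarith) (by linarith))
  · have hpow : IntegrableOn (fun x : ℝ => x ^ (-(a + b))) (Ioi 1) :=
      integrableOn_Ioi_rpow_of_lt (by linarith) one_pos
    refine hpow.mono' hmeas.restrict ((ae_restrict_iff' measurableSet_Ioi).mpr ?_)
    refine Eventually.of_forall fun x (hx : 1 < x) => ?_
    have hx0 : 0 < x := one_pos.trans hx
    rw [norm_of_nonneg (by unfold betaIntegrand; positivity), neg_add, rpow_add hx0]
    exact mul_le_mul_of_nonneg_left (rpow_le_rpow_of_nonpos hx0 (by linarith) (by linarith))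
      (by positivity)

theorem shiftedTerm_nonneg (hh : 0 ≤ h) {x : ℝ} (hx : 0 ≤ x) : 0 ≤ shiftedTerm a b h x := by
  unfold shiftedTerm; positivity

theorem antitoneOn_shiftedTerm (ha : 0 ≤ a) (hb : 0 ≤ b) (hh : 0 ≤ h) :
    AntitoneOn (shiftedTerm a b h) (Ici 0) := by
  intro x (hx : 0 ≤ x) y (hy : 0 ≤ y) hxy
  exact mul_le_mul (rpow_le_rpow_of_nonpos (by linarith) (by linarith) (by linarith))
    (rpow_le_rpow_of_nonpos (by linarith) (by linarith) (by linarith)) (by positivity)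
    (by positivity)

theorem shiftedTerm_le_betaIntegrand (ha : 0 ≤ a) (hb : 0 ≤ b) (hh : 0 ≤ h) {x : ℝ}
    (hx : 0 < x) :
    shiftedTerm a b h x ≤ betaIntegrand a b x :=
  mul_le_mul (rpow_le_rpow_of_nonpos hx (by linarith) (by linarith))
    (rpow_le_rpow_of_nonpos (by linarith) (by linarith) (by linarith)) (by positivity)
    (by positivity)

theorem integrableOn_shiftedTerm (ha : 0 ≤ a) (ha1 : a < 1) (hab : 1 < a + b) (hh : 0 ≤ h) :
    IntegrableOn (shiftedTerm a b h) (Ioi 0) := by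
  refine (integrableOn_betaIntegrand ha1 hab).mono' (by unfold shiftedTerm; fun_prop)
    ((ae_restrict_iff' measurableSet_Ioi).mpr (Eventually.of_forall fun x (hx : 0 < x) => ?_))
  rw [norm_of_nonneg (shiftedTerm_nonneg hh hx.le)]
  exact shiftedTerm_le_betaIntegrand ha (by linarith) hh hx

theorem shiftedTerm_eq (hh : 0 < h) {x : ℝ} (hx : -1 < x) :
    shiftedTerm a b h x = h ^ (-(a + b)) * betaIntegrand a b (h⁻¹ * (x + 1)) := by
  have hx1 : 0 < x + 1 := by linarith
  have hhx : h⁻¹ * (x + 1) + 1 = h⁻¹ * (x + h + 1) := by field_simp; ring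
  unfold shiftedTerm betaIntegrand
  rw [hhx, mul_rpow (by positivity) hx1.le, mul_rpow (by positivity) (by linarith),
    inv_rpow hh.le, inv_rpow hh.le, neg_add, rpow_add hh]
  field_simp

theorem integral_shiftedTerm (hh : 0 < h) :
    ∫ x in Ioi 0, shiftedTerm a b h x =
      h ^ (1 - (a + b)) * ∫ u in Ioi h⁻¹, betaIntegrand a b u := by
  calc ∫ x in Ioi 0, shiftedTerm a b h x
      = ∫ x in Ioi 0, h ^ (-(a + b)) * betaIntegrand a b (h⁻¹ * (x + 1)) :=
        setIntegral_congr_fun measurableSet_Ioi fun x (hx : 0 < x) =>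
          shiftedTerm_eq hh (by linarith)
    _ = h ^ (-(a + b)) * ∫ y in Ioi 1, betaIntegrand a b (h⁻¹ * y) := by
        rw [integral_const_mul,
          setIntegral_Ioi_comp_add_right (fun y => betaIntegrand a b (h⁻¹ * y)), zero_add]
    _ = h ^ (1 - (a + b)) * ∫ u in Ioi h⁻¹, betaIntegrand a b u := by
        rw [integral_comp_mul_left_Ioi _ _ (inv_pos.mpr hh), mul_one, inv_inv, smul_eq_mul,
          ← mul_assoc, sub_eq_neg_add, rpow_add hh, rpow_one]

variable (ha : 0 ≤ a) (ha1 : a < 1) (hab : 1 < a + b) (hh : 0 < h)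
include ha ha1 hab hh

theorem setIntegral_Ioi_inv_le_tsum_shiftedTerm_div :
    ∫ u in Ioi h⁻¹, betaIntegrand a b u ≤
      (∑' j : ℕ, shiftedTerm a b h j) / h ^ (1 - (a + b)) := by
  have hb : 0 ≤ b := by linarith
  have hanti := antitoneOn_shiftedTerm ha hb hh.le
  have hnonneg : ∀ x ∈ Ioi (0 : ℝ), 0 ≤ shiftedTerm a b h x := fun _ hx =>
    shiftedTerm_nonneg hh.le (le_of_lt hx)
  have hsum := hanti.summable_of_integrableOn_Ioi_zero
    (integrableOn_shiftedTerm ha ha1 hab hh.le) hnonneg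
  rw [le_div_iff₀ (by positivity), mul_comm, ← integral_shiftedTerm hh]
  exact hanti.integral_le_tsum hsum hnonneg

theorem tsum_shiftedTerm_div_le :
    (∑' j : ℕ, shiftedTerm a b h j) / h ^ (1 - (a + b)) ≤
      (∫ x in Ioi 0, betaIntegrand a b x) + h ^ (a - 1) := by
  have hb : 0 ≤ b := by linarith
  have hf := integrableOn_betaIntegrand ha1 hab
  have hnonneg : ∀ x ∈ Ioi (0 : ℝ), 0 ≤ shiftedTerm a b h x := fun _ hx =>
    shiftedTerm_nonneg hh.le (le_of_lt hx)
  have hhead : shiftedTerm a b h 0 ≤ h ^ (a - 1) * h ^ (1 - (a + b)) := by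
    rw [← rpow_add hh, show a - 1 + (1 - (a + b)) = -b by ring]
    simpa [shiftedTerm] using rpow_le_rpow_of_nonpos hh (by linarith) (by linarith)
  have htail : ∫ u in Ioi h⁻¹, betaIntegrand a b u ≤ ∫ x in Ioi 0, betaIntegrand a b x :=
    setIntegral_mono_set hf
      ((ae_restrict_iff' measurableSet_Ioi).mpr (Eventually.of_forall fun x (hx : 0 < x) => by
        unfold betaIntegrand; positivity))
      (Ioi_subset_Ioi (inv_nonneg.mpr hh.le)).eventuallyLE
  have hP : 0 < h ^ (1 - (a + b)) := by positivity
  rw [div_le_iff₀ hP]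
  calc ∑' j : ℕ, shiftedTerm a b h j
      ≤ shiftedTerm a b h 0 + ∫ x in Ioi 0, shiftedTerm a b h x :=
        (antitoneOn_shiftedTerm ha hb hh.le).tsum_le_integral
          (integrableOn_shiftedTerm ha ha1 hab hh.le) hnonneg
    _ ≤ h ^ (a - 1) * h ^ (1 - (a + b)) +
          h ^ (1 - (a + b)) * ∫ x in Ioi 0, betaIntegrand a b x := by
        rw [integral_shiftedTerm hh]
        gcongr
    _ = _ := by ring

end

theorem stmt_1 (a b : ℝ) (ha : 1/2 < a) (ha1 : a < 1) (hb : 1/2 < b) :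
    Tendsto
      (fun h : ℕ =>
        (∑' j : ℕ, ((j : ℝ) + 1) ^ (-a) * ((j : ℝ) + (h : ℝ) + 1) ^ (-b)) /
          (h : ℝ) ^ (1 - (a + b)))
      atTop
      (nhds (∫ x in Ioi (0:ℝ), x ^ (-a) * (x + 1) ^ (-b))) := by
  have ha0 : 0 ≤ a := by linarith
  have hab : 1 < a + b := by linarith
  have hlow : Tendsto (fun h : ℕ => ∫ u in Ioi (h : ℝ)⁻¹, betaIntegrand a b u) atTop
      (𝓝 (∫ x in Ioi 0, betaIntegrand a b x)) :=
    (tendsto_setIntegral_Ioi_nhdsGT (integrableOn_betaIntegrand ha1 hab)).comp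
      (tendsto_inv_atTop_nhdsGT_zero.comp tendsto_natCast_atTop_atTop)
  have hup : Tendsto (fun h : ℕ => (∫ x in Ioi 0, betaIntegrand a b x) + (h : ℝ) ^ (a - 1)) atTop
      (𝓝 (∫ x in Ioi 0, betaIntegrand a b x)) := by
    have hpow :=
      (tendsto_rpow_neg_atTop (by linarith : 0 < 1 - a)).comp tendsto_natCast_atTop_atTop
    simpa [Function.comp_def] using tendsto_const_nhds.add hpow
  refine tendsto_of_tendsto_of_tendsto_of_le_of_le' hlow hup ?_ ?_ <;>
    filter_upwards [eventually_gt_atTop 0] with h hh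
  · exact setIntegral_Ioi_inv_le_tsum_shiftedTerm_div ha0 ha1 hab (Nat.cast_pos.mpr hh)
  · exact tsum_shiftedTerm_div_le ha0 ha1 hab (Nat.cast_pos.mpr hh)
end

section
/- Let a, b be reals with 1/2 < a < 1 and b > 1/2. For every positive integer h, Σ_{j=0}^∞ (j+1)^(−a)(j+h+1)^(−b) ≥ h^(1−(a+b)) · ∫_{1/h}^∞ x^(−a)(x+1)^(−b) dx, and Σ_{j=0}^∞ (j+1)^(−a)(j+h+1)^(−b) ≤ h^(1−(a+b)) · ∫_0^∞ x^(−a)(x+1)^(−b) dx. -/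
/-!
Write `f x = x ^ (-a) * (x + h) ^ (-b)`, so that the series is `∑_{n ≥ 1} f n`. Since `f` is
nonnegative, decreasing and integrable on `(0, ∞)` (it behaves like `x ^ (-a)` at `0` and like
`x ^ (-(a + b))` at `∞`), the integral test squeezes the series between `∫_1^∞ f` and
`∫_0^∞ f`, and the substitution `x = h y` turns `∫_c^∞ f` into
`h ^ (1 - (a + b)) * ∫_{c/h}^∞ y ^ (-a) * (y + 1) ^ (-b) dy`.
-/

open MeasureTheory Set Real

namespace AntitoneOn

variable {f : ℝ → ℝ}

theorem integral_Ioi_one_le_tsum_add_one (anti : AntitoneOn f (Ioi 0))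
    (integrable : IntegrableOn f (Ioi 0)) (nonneg : ∀ t ∈ Ioi 0, 0 ≤ f t) :
    ∫ x in Ioi 1, f x ≤ ∑' n : ℕ, f (n + 1 : ℕ) := by
  have h₁ : Ici ((1 : ℕ) : ℝ) ⊆ Ioi 0 := Ici_subset_Ioi.2 (by norm_num)
  have anti₁ := anti.mono h₁
  have nonneg₁ : ∀ t ∈ Ioi ((1 : ℕ) : ℝ), 0 ≤ f t := fun t ht =>
    nonneg t (h₁ (mem_Ici_of_Ioi ht))
  have summable := anti₁.summable_of_integrableOn_Ioi
    (integrable.mono_set (Ioi_subset_Ioi (by norm_num))) nonneg₁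
  exact_mod_cast anti₁.integral_le_tsum_comp_add 1 summable nonneg₁

/-- Unlike `AntitoneOn.tsum_add_one_le_integral`, this only asks for antitonicity on `Ioi 0`,
which matters for functions such as `x ^ (-a)` that blow up at `0` (where `0 ^ (-a) = 0`).
The first term is bounded by the integral over `(0, 1]`, the rest by the integral test on
`[1, ∞)`. -/
theorem tsum_add_one_le_integral_of_Ioi (anti : AntitoneOn f (Ioi 0))
    (integrable : IntegrableOn f (Ioi 0)) (nonneg : ∀ t ∈ Ioi 0, 0 ≤ f t) :
    ∑' n : ℕ, f (n + 1 : ℕ) ≤ ∫ x in Ioi 0, f x := by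
  have h₁ : Ici ((1 : ℕ) : ℝ) ⊆ Ioi 0 := Ici_subset_Ioi.2 (by norm_num)
  have anti₁ := anti.mono h₁
  have integrable₁ : IntegrableOn f (Ioi ((1 : ℕ) : ℝ)) :=
    integrable.mono_set (Ioi_subset_Ioi (by norm_num))
  have nonneg₁ : ∀ t ∈ Ioi ((1 : ℕ) : ℝ), 0 ≤ f t := fun t ht =>
    nonneg t (h₁ (mem_Ici_of_Ioi ht))
  have head : f 1 ≤ ∫ x in (0 : ℝ)..1, f x :=
    calc f 1 = ∫ _ in (0 : ℝ)..1, f 1 := by simp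
      _ ≤ ∫ x in (0 : ℝ)..1, f x :=
        intervalIntegral.integral_mono_on_of_le_Ioo zero_le_one intervalIntegrable_const
          ((intervalIntegrable_iff_integrableOn_Ioc_of_le zero_le_one).2
            (integrable.mono_set Ioc_subset_Ioi_self))
          fun x hx => anti hx.1 (mem_Ioi.2 one_pos) hx.2.le
  have tail := anti₁.tsum_comp_add_le_integral 1 integrable₁ nonneg₁
  have summable :=
    (summable_nat_add_iff 1).2 (anti₁.summable_of_integrableOn_Ioi integrable₁ nonneg₁)
  rw [summable.tsum_eq_zero_add,
    ← intervalIntegral.integral_interval_add_Ioi integrable integrable₁]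
  push_cast at tail ⊢
  simpa using add_le_add head tail

end AntitoneOn

section

variable {a b H : ℝ}

theorem antitoneOn_rpow_neg_mul_add_rpow_neg (ha : 0 ≤ a) (hb : 0 ≤ b) (hH : 0 ≤ H) :
    AntitoneOn (fun x : ℝ => x ^ (-a) * (x + H) ^ (-b)) (Ioi 0) := by
  intro x (hx : 0 < x) y _ hxy
  exact mul_le_mul (rpow_le_rpow_of_nonpos hx hxy (neg_nonpos.2 ha))
    (rpow_le_rpow_of_nonpos (by linarith) (by linarith) (neg_nonpos.2 hb))
    (rpow_nonneg (by linarith) _) (rpow_nonneg hx.le _)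

theorem integrableOn_Ioi_rpow_neg_mul_add_rpow_neg (ha : a < 1) (hab : 1 < a + b) (hH : 0 < H) :
    IntegrableOn (fun x : ℝ => x ^ (-a) * (x + H) ^ (-b)) (Ioi 0) := by
  have hb : -b ≤ 0 := by linarith
  have hmeas : Measurable fun x : ℝ => x ^ (-a) * (x + H) ^ (-b) := by fun_prop
  rw [← Ioc_union_Ioi_eq_Ioi zero_le_one]
  refine IntegrableOn.union ?_ ?_
  · have hmaj : IntegrableOn (fun x : ℝ => x ^ (-a) * H ^ (-b)) (Ioc 0 1) :=
      ((intervalIntegrable_iff_integrableOn_Ioc_of_le zero_le_one).1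
        (intervalIntegral.intervalIntegrable_rpow' (by linarith))).mul_const _
    refine hmaj.mono' hmeas.aestronglyMeasurable ?_
    filter_upwards [ae_restrict_mem measurableSet_Ioc] with x hx
    rw [norm_of_nonneg (mul_nonneg (rpow_nonneg hx.1.le _) (rpow_nonneg (by linarith [hx.1]) _))]
    exact mul_le_mul_of_nonneg_left (rpow_le_rpow_of_nonpos hH (by linarith [hx.1]) hb)
      (rpow_nonneg hx.1.le _)
  · refine (integrableOn_Ioi_rpow_of_lt (by linarith : -(a + b) < -1) one_pos).mono'
      hmeas.aestronglyMeasurable ?_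
    filter_upwards [ae_restrict_mem measurableSet_Ioi] with x (hx : 1 < x)
    rw [norm_of_nonneg (by positivity), neg_add, rpow_add (by linarith)]
    exact mul_le_mul_of_nonneg_left (rpow_le_rpow_of_nonpos (by linarith) (by linarith) hb)
      (rpow_nonneg (by linarith) _)

theorem rpow_neg_mul_add_rpow_neg_mul (hH : 0 < H) {y : ℝ} (hy : 0 ≤ y) :
    (H * y) ^ (-a) * (H * y + H) ^ (-b) = H ^ (-(a + b)) * (y ^ (-a) * (y + 1) ^ (-b)) := by
  rw [show H * y + H = H * (y + 1) by ring, mul_rpow hH.le hy, mul_rpow hH.le (by linarith),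
    neg_add, rpow_add hH]
  ring

theorem integral_Ioi_rpow_neg_mul_add_rpow_neg (hH : 0 < H) {c : ℝ} (hc : 0 ≤ c) :
    ∫ x in Ioi c, x ^ (-a) * (x + H) ^ (-b) =
      H ^ (1 - (a + b)) * ∫ x in Ioi (c / H), x ^ (-a) * (x + 1) ^ (-b) := by
  have hsubst := integral_comp_mul_left_Ioi' (fun x => x ^ (-a) * (x + H) ^ (-b)) (c / H) hH
  rw [mul_div_cancel₀ c hH.ne'] at hsubst
  rw [← hsubst, setIntegral_congr_fun measurableSet_Ioi fun y (hy : c / H < y) =>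
      rpow_neg_mul_add_rpow_neg_mul hH ((div_nonneg hc hH.le).trans hy.le),
    integral_const_mul, smul_eq_mul, ← mul_assoc, sub_eq_add_neg, rpow_add hH, rpow_one]

end

theorem stmt_3 (a b : ℝ) (ha : 1/2 < a) (ha1 : a < 1) (hb : 1/2 < b)
    (h : ℕ) (hh : 1 ≤ h) :
    (h : ℝ) ^ (1 - (a + b)) *
        ∫ x in Ioi (1 / (h : ℝ)), x ^ (-a) * (x + 1) ^ (-b) ≤
      (∑' j : ℕ, ((j : ℝ) + 1) ^ (-a) * ((j : ℝ) + (h : ℝ) + 1) ^ (-b)) ∧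
    (∑' j : ℕ, ((j : ℝ) + 1) ^ (-a) * ((j : ℝ) + (h : ℝ) + 1) ^ (-b)) ≤
      (h : ℝ) ^ (1 - (a + b)) * ∫ x in Ioi (0:ℝ), x ^ (-a) * (x + 1) ^ (-b) := by
  have hH : (0 : ℝ) < h := by exact_mod_cast hh
  set f : ℝ → ℝ := fun x => x ^ (-a) * (x + h) ^ (-b) with hf
  have anti : AntitoneOn f (Ioi 0) :=
    antitoneOn_rpow_neg_mul_add_rpow_neg (by linarith) (by linarith) hH.le
  have integrable : IntegrableOn f (Ioi 0) :=
    integrableOn_Ioi_rpow_neg_mul_add_rpow_neg ha1 (by linarith) hH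
  have nonneg : ∀ t ∈ Ioi (0 : ℝ), 0 ≤ f t := fun t (ht : 0 < t) =>
    mul_nonneg (rpow_nonneg ht.le _) (rpow_nonneg (by linarith) _)
  have hsum : ∑' j : ℕ, ((j : ℝ) + 1) ^ (-a) * ((j : ℝ) + h + 1) ^ (-b) =
      ∑' n : ℕ, f (n + 1 : ℕ) :=
    tsum_congr fun j => by simp only [hf]; push_cast; ring_nf
  have scale₀ := integral_Ioi_rpow_neg_mul_add_rpow_neg (a := a) (b := b) hH le_rfl
  rw [zero_div] at scale₀
  rw [hsum, ← integral_Ioi_rpow_neg_mul_add_rpow_neg hH zero_le_one, ← scale₀]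
  exact ⟨anti.integral_Ioi_one_le_tsum_add_one integrable nonneg,
    anti.tsum_add_one_le_integral_of_Ioi integrable nonneg⟩
end

section
/- Let a > 1/2 and b > 1/2 be reals. The double series Σ_{h=1}^∞ Σ_{j=1}^∞ (j+1)^(−a)(j+h+1)^(−b) converges if and only if both b > 1 and a + b > 2. -/
/-!
For `b > 1` the inner sum `∑ₕ (j + h + 3)^(-b)` has the size of `(j + 2)^(1 - b)`, so the double
series behaves like the `p`-series `∑ⱼ (j + 2)^(1 - a - b)`. For convergence, write `b = s + t` with
`t > 1` and `a + s > 1`: then the term is dominated by `(h + 1)^(-t) (j + 2)^(-(a + s))`, a product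
of two convergent `p`-series. Conversely, the row `j = 0` of a convergent series forces `b > 1`, and
for each `j` the `j + 2` terms with `h ≤ j + 1` are each at least `(j + 2)^(-a) (2 (j + 2))^(-b)`.
-/

open Real Finset

lemma summable_nat_add_rpow_iff (c : ℝ) (k : ℕ) :
    Summable (fun n : ℕ => ((n : ℝ) + k) ^ c) ↔ c < -1 := by
  rw [← summable_nat_rpow, ← summable_nat_add_iff (f := fun n : ℕ => (n : ℝ) ^ c) k]
  simp only [Nat.cast_add]

lemma rpow_neg_add_le_mul_rpow_neg {x y s t : ℝ} (hx : 0 < x) (hy : 0 < y) (hs : 0 ≤ s)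
    (ht : 0 ≤ t) : (x + y) ^ (-(s + t)) ≤ x ^ (-s) * y ^ (-t) := by
  rw [neg_add, rpow_add (by positivity)]
  exact mul_le_mul (rpow_le_rpow_of_nonpos hx (by linarith) (by linarith))
    (rpow_le_rpow_of_nonpos hy (by linarith) (by linarith)) (by positivity) (by positivity)

noncomputable def doubleSeriesTerm (a b : ℝ) (p : ℕ × ℕ) : ℝ :=
  ((p.2 : ℝ) + 2) ^ (-a) * ((p.2 : ℝ) + (p.1 : ℝ) + 3) ^ (-b)

namespace doubleSeriesTerm

variable {a b : ℝ}

lemma nonneg (a b : ℝ) : 0 ≤ doubleSeriesTerm a b := fun _ => by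
  unfold doubleSeriesTerm; positivity

lemma summable_of_one_lt_of_two_lt_add (hb : 1 < b) (hab : 2 < a + b) : Summable (doubleSeriesTerm a b) := by
  obtain ⟨t, ht, htb, hta⟩ : ∃ t, 1 < t ∧ t ≤ b ∧ t < a + b - 1 := by
    obtain ⟨t, ht, htmin⟩ := exists_between (lt_min hb (by linarith : 1 < a + b - 1))
    exact ⟨t, ht, (lt_min_iff.1 htmin).1.le, (lt_min_iff.1 htmin).2⟩
  have hrow : Summable fun h : ℕ => ((h : ℝ) + 1) ^ (-t) := by
    simpa using (summable_nat_add_rpow_iff (-t) 1).2 (by linarith)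
  have hcol : Summable fun j : ℕ => ((j : ℝ) + 2) ^ (-(a + (b - t))) := by
    simpa using (summable_nat_add_rpow_iff _ 2).2 (by linarith)
  refine .of_nonneg_of_le (nonneg a b) (fun ⟨h, j⟩ => ?_)
    (hrow.mul_of_nonneg hcol (fun _ => by positivity) (fun _ => by positivity))
  have hj : (0 : ℝ) < j + 2 := by positivity
  calc doubleSeriesTerm a b (h, j)
      = ((j : ℝ) + 2) ^ (-a) * (((j : ℝ) + 2) + ((h : ℝ) + 1)) ^ (-((b - t) + t)) := by
        simp only [doubleSeriesTerm, sub_add_cancel]; ring_nf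
    _ ≤ ((j : ℝ) + 2) ^ (-a) * (((j : ℝ) + 2) ^ (-(b - t)) * ((h : ℝ) + 1) ^ (-t)) := by
        exact mul_le_mul_of_nonneg_left
          (rpow_neg_add_le_mul_rpow_neg hj (by positivity) (by linarith) (by linarith))
          (by positivity)
    _ = ((h : ℝ) + 1) ^ (-t) * ((j : ℝ) + 2) ^ (-(a + (b - t))) := by
        rw [neg_add, rpow_add hj]; ring

lemma one_lt_of_summable (hf : Summable (doubleSeriesTerm a b)) : 1 < b := by
  have hrow : Summable fun h : ℕ => (2 : ℝ) ^ (-a) * ((h : ℝ) + 3) ^ (-b) :=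
    (hf.prod_symm.prod_factor 0).congr fun h => by simp [doubleSeriesTerm]
  have := (summable_nat_add_rpow_iff (-b) 3).1
    (by simpa using (summable_mul_left_iff (by positivity)).1 hrow)
  linarith

lemma rpow_le_sum_range (a : ℝ) (hb : 0 ≤ b) (j : ℕ) :
    2 ^ (-b) * ((j : ℝ) + 2) ^ (1 - a - b) ≤ ∑ h ∈ range (j + 2), doubleSeriesTerm a b (h, j) := by
  have hj : (0 : ℝ) < j + 2 := by positivity
  have hterm : ∀ h ∈ range (j + 2),
      ((j : ℝ) + 2) ^ (-a) * (2 * ((j : ℝ) + 2)) ^ (-b) ≤ doubleSeriesTerm a b (h, j) := by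
    intro h hh
    have hh : (h : ℝ) ≤ j + 1 := by exact_mod_cast Nat.lt_succ_iff.1 (mem_range.1 hh)
    exact mul_le_mul_of_nonneg_left
      (rpow_le_rpow_of_nonpos (by positivity) (by linarith) (by linarith)) (by positivity)
  calc 2 ^ (-b) * ((j : ℝ) + 2) ^ (1 - a - b)
      = ((j + 2 : ℕ) : ℝ) * (((j : ℝ) + 2) ^ (-a) * (2 * ((j : ℝ) + 2)) ^ (-b)) := by
        rw [mul_rpow (by norm_num) hj.le, sub_sub, sub_eq_add_neg, neg_add, rpow_add hj,
          rpow_add hj, rpow_one]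
        push_cast; ring
    _ ≤ ∑ h ∈ range (j + 2), doubleSeriesTerm a b (h, j) := by
        simpa [nsmul_eq_mul] using card_nsmul_le_sum _ _ _ hterm

lemma two_lt_add_of_summable (hf : Summable (doubleSeriesTerm a b)) : 2 < a + b := by
  have hb := one_lt_of_summable hf
  have hcols : Summable fun j : ℕ => 2 ^ (-b) * ((j : ℝ) + 2) ^ (1 - a - b) :=
    hf.prod_symm.prod.of_nonneg_of_le (fun _ => by positivity) fun j =>
      (rpow_le_sum_range a (by linarith) j).trans
        ((hf.prod_symm.prod_factor j).sum_le_tsum _ fun _ _ => nonneg a b _)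
  have := (summable_nat_add_rpow_iff _ 2).1
    (by simpa using (summable_mul_left_iff (by positivity)).1 hcols)
  linarith

end doubleSeriesTerm

theorem stmt_5_general (a b : ℝ) :
    Summable (fun p : ℕ × ℕ =>
        ((p.2 : ℝ) + 2) ^ (-a) * ((p.2 : ℝ) + (p.1 : ℝ) + 3) ^ (-b)) ↔
      (1 < b ∧ 2 < a + b) :=
  ⟨fun hf => ⟨doubleSeriesTerm.one_lt_of_summable hf, doubleSeriesTerm.two_lt_add_of_summable hf⟩,
    fun h => doubleSeriesTerm.summable_of_one_lt_of_two_lt_add h.1 h.2⟩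

theorem stmt_5 (a b : ℝ) (ha : 1/2 < a) (hb : 1/2 < b) :
    Summable (fun p : ℕ × ℕ =>
        ((p.2 : ℝ) + 2) ^ (-a) * ((p.2 : ℝ) + (p.1 : ℝ) + 3) ^ (-b)) ↔
      (1 < b ∧ 2 < a + b) :=
  stmt_5_general a b
end

section
/- Let a, b be reals with 1/2 < a < 1 and 1/2 < b < 1. Then Σ_{k=1}^{n−1} S(k) ~ [c(a,b)/(2−(a+b))] · n^(2−(a+b)) as n → ∞, where S(k) := Σ_{j=0}^∞ (j+1)^(−a)(j+k+1)^(−b) and c(a,b) := ∫₀^∞ x^(−a)(x+1)^(−b) dx. -/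
/-! Put `f x = x ^ (-a) * (x + 1) ^ (-b)`, antitone on `(0, ∞)` and integrable there since
`a < 1 < a + b`. Then `k ^ (a + b - 1) * S k = ∑ j, k⁻¹ * f ((j + 1) / k)` is a right Riemann sum
of `f`, squeezed between `∫ x in Ioi k⁻¹, f x` and `∫ x in Ioi 0, f x`, so `S k ~ c * k ^ p` with
`p = 1 - (a + b) ∈ (-1, 0)`. Compare `S` with `g k = (k + 1) ^ (p + 1) - k ^ (p + 1)`, which is
`~ (p + 1) * k ^ p` and whose partial sums telescope to `n ^ (p + 1)`: by Stolz–Cesàro the ratio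
of the partial sums tends to `c / (p + 1)`. -/

open MeasureTheory Set Filter

section

open Finset intervalIntegral Topology Asymptotics Real

section RiemannSum

variable {f : ℝ → ℝ} {h : ℝ}

theorem AntitoneOn.sum_range_mul_le_integral_Ioi (hf : AntitoneOn f (Ioi 0))
    (hf0 : ∀ x ∈ Ioi (0 : ℝ), 0 ≤ f x) (hfi : IntegrableOn f (Ioi 0)) (hh : 0 < h) (N : ℕ) :
    ∑ j ∈ range N, h * f ((j + 1) * h) ≤ ∫ x in Ioi 0, f x := by
  have hint (j : ℕ) : IntervalIntegrable f volume (j * h) ((j + 1) * h) :=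
    (intervalIntegrable_iff_integrableOn_Ioc_of_le (by gcongr; linarith)).2
      (hfi.mono_set fun x hx => (by positivity : (0 : ℝ) ≤ j * h).trans_lt hx.1)
  calc ∑ j ∈ range N, h * f ((j + 1) * h)
      ≤ ∑ j ∈ range N, ∫ x in (j * h)..((j + 1) * h), f x := by
        gcongr with j
        calc h * f ((j + 1) * h) = ∫ _ in (j * h)..((j + 1) * h), f ((j + 1) * h) := by
              simp only [intervalIntegral.integral_const, smul_eq_mul]; ring
          _ ≤ _ := integral_mono_on_of_le_Ioo (by gcongr; linarith) intervalIntegrable_const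
              (hint j) fun x hx => hf ((by positivity : (0 : ℝ) ≤ j * h).trans_lt hx.1)
                (mem_Ioi.2 (by positivity)) hx.2.le
    _ = ∫ x in (0 : ℝ)..(N * h), f x := by
        simpa using sum_integral_adjacent_intervals (a := fun j : ℕ => (j : ℝ) * h)
          fun j _ => by simpa using hint j
    _ ≤ ∫ x in Ioi 0, f x := by
        rw [integral_of_le (by positivity)]
        exact setIntegral_mono_set hfi (ae_restrict_of_forall_mem measurableSet_Ioi hf0)
          Ioc_subset_Ioi_self.eventuallyLE

theorem AntitoneOn.integral_le_sum_range_mul (hf : AntitoneOn f (Ioi 0)) (hh : 0 < h) (N : ℕ) :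
    ∫ x in h..((N + 1) * h), f x ≤ ∑ j ∈ range N, h * f ((j + 1) * h) := by
  have hle (j : ℕ) : ((j : ℝ) + 1) * h ≤ (j + 1 + 1) * h := by gcongr; linarith
  have hint (j : ℕ) : IntervalIntegrable f volume ((j + 1) * h) ((j + 1 + 1) * h) := by
    refine (hf.mono fun x hx => ?_).intervalIntegrable
    rw [uIcc_of_le (hle j)] at hx
    exact (by positivity : (0 : ℝ) < (j + 1) * h).trans_le hx.1
  calc ∫ x in h..((N + 1) * h), f x
      = ∑ j ∈ range N, ∫ x in ((j + 1) * h)..((j + 1 + 1) * h), f x := by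
        simpa using (sum_integral_adjacent_intervals (a := fun j : ℕ => ((j : ℝ) + 1) * h)
          fun j _ => by simpa using hint j).symm
    _ ≤ ∑ j ∈ range N, h * f ((j + 1) * h) := by
        gcongr with j
        calc ∫ x in ((j + 1) * h)..((j + 1 + 1) * h), f x
            ≤ ∫ _ in ((j + 1) * h)..((j + 1 + 1) * h), f ((j + 1) * h) :=
              integral_mono_on_of_le_Ioo (hle j) (hint j) intervalIntegrable_const
                fun x hx => hf (mem_Ioi.2 (by positivity))
                  ((by positivity : (0 : ℝ) < (j + 1) * h).trans hx.1) hx.1.le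
          _ = h * f ((j + 1) * h) := by
              simp only [intervalIntegral.integral_const, smul_eq_mul]; ring

theorem AntitoneOn.tendsto_tsum_mul_nhdsGT_zero (hf : AntitoneOn f (Ioi 0))
    (hf0 : ∀ x ∈ Ioi (0 : ℝ), 0 ≤ f x) (hfi : IntegrableOn f (Ioi 0)) :
    Tendsto (fun h => ∑' j : ℕ, h * f ((j + 1) * h)) (𝓝[>] 0) (𝓝 (∫ x in Ioi 0, f x)) := by
  refine tendsto_of_tendsto_of_tendsto_of_le_of_le'
    (hfi.continuousWithinAt_Ici_primitive_Ioi.mono Ioi_subset_Ici_self) tendsto_const_nhds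
    ?_ ?_ <;> filter_upwards [self_mem_nhdsWithin] with h (hh : 0 < h)
  all_goals have hnonneg (j : ℕ) : 0 ≤ h * f ((j + 1) * h) :=
    mul_nonneg hh.le (hf0 _ (mem_Ioi.2 (by positivity)))
  · have hsum := summable_of_sum_range_le hnonneg (hf.sum_range_mul_le_integral_Ioi hf0 hfi hh)
    refine le_of_tendsto_of_tendsto' (intervalIntegral_tendsto_integral_Ioi h
      (hfi.mono_set (Ioi_subset_Ioi hh.le)) ?_) hsum.hasSum.tendsto_sum_nat
      fun N => hf.integral_le_sum_range_mul hh N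
    exact (tendsto_atTop_add_const_right _ 1 tendsto_natCast_atTop_atTop).atTop_mul_const hh
  · exact Real.tsum_le_of_sum_range_le hnonneg (hf.sum_range_mul_le_integral_Ioi hf0 hfi hh)

end RiemannSum

section Kernel

variable {a b : ℝ}

theorem antitoneOn_rpow_neg_mul_add_one_rpow_neg (ha : 0 ≤ a) (hb : 0 ≤ b) :
    AntitoneOn (fun x : ℝ => x ^ (-a) * (x + 1) ^ (-b)) (Ioi 0) :=
  fun x (hx : 0 < x) y _ hxy => mul_le_mul (rpow_le_rpow_of_nonpos hx hxy (neg_nonpos.2 ha))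
    (rpow_le_rpow_of_nonpos (by linarith) (by linarith) (neg_nonpos.2 hb))
    (rpow_nonneg (by linarith) _) (rpow_nonneg hx.le _)

theorem integrableOn_rpow_neg_mul_add_one_rpow_neg (ha1 : a < 1) (hb : 0 ≤ b)
    (hab : 1 < a + b) : IntegrableOn (fun x : ℝ => x ^ (-a) * (x + 1) ^ (-b)) (Ioi 0) := by
  have hmeas : AEStronglyMeasurable (fun x : ℝ => x ^ (-a) * (x + 1) ^ (-b)) :=
    (by fun_prop : Measurable fun x : ℝ => x ^ (-a) * (x + 1) ^ (-b)).aestronglyMeasurable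
  rw [← Ioc_union_Ioi_eq_Ioi zero_le_one]
  refine IntegrableOn.union ?_ ?_
  · refine Integrable.mono' ((intervalIntegrable_iff_integrableOn_Ioc_of_le zero_le_one).1
      (intervalIntegrable_rpow' (r := -a) (by linarith))) hmeas.restrict
      ((ae_restrict_iff' measurableSet_Ioc).2 (ae_of_all _ fun x hx => ?_))
    rw [norm_of_nonneg (by have := hx.1; positivity)]
    exact mul_le_of_le_one_right (rpow_nonneg hx.1.le _)
      (rpow_le_one_of_one_le_of_nonpos (by linarith [hx.1]) (neg_nonpos.2 hb))
  · refine Integrable.mono' (integrableOn_Ioi_rpow_of_lt (a := -(a + b)) (by linarith) one_pos)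
      hmeas.restrict ((ae_restrict_iff' measurableSet_Ioi).2 (ae_of_all _ fun x hx => ?_))
    have hx0 : (0 : ℝ) < x := one_pos.trans hx
    rw [norm_of_nonneg (by positivity), neg_add, rpow_add hx0]
    exact mul_le_mul_of_nonneg_left (rpow_le_rpow_of_nonpos hx0 (by linarith) (neg_nonpos.2 hb))
      (by positivity)

theorem inv_mul_rpow_neg_mul_add_one_rpow_neg {x k : ℝ} (hx : 0 ≤ x) (hk : 0 < k) :
    k⁻¹ * ((x * k⁻¹) ^ (-a) * (x * k⁻¹ + 1) ^ (-b)) =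
      k ^ (a + b - 1) * (x ^ (-a) * (x + k) ^ (-b)) := by
  have hsplit : x * k⁻¹ + 1 = (x + k) * k⁻¹ := by field_simp
  rw [hsplit, mul_rpow hx (by positivity), mul_rpow (by positivity) (by positivity),
    inv_rpow hk.le, inv_rpow hk.le, rpow_neg hk.le, rpow_neg hk.le, inv_inv, inv_inv,
    rpow_sub_one hk.ne', rpow_add hk]
  field_simp

theorem tendsto_rpow_mul_tsum_rpow_neg_mul_rpow_neg (ha : 0 ≤ a) (ha1 : a < 1) (hb : 0 ≤ b)
    (hab : 1 < a + b) :
    Tendsto (fun k : ℕ => (k : ℝ) ^ (a + b - 1) *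
        ∑' j : ℕ, ((j : ℝ) + 1) ^ (-a) * ((j : ℝ) + k + 1) ^ (-b))
      atTop (𝓝 (∫ x in Ioi 0, x ^ (-a) * (x + 1) ^ (-b))) := by
  have hlim := (AntitoneOn.tendsto_tsum_mul_nhdsGT_zero
    (antitoneOn_rpow_neg_mul_add_one_rpow_neg ha hb) (fun x (hx : 0 < x) => by positivity)
    (integrableOn_rpow_neg_mul_add_one_rpow_neg ha1 hb hab)).comp
    (tendsto_inv_atTop_nhdsGT_zero.comp tendsto_natCast_atTop_atTop)
  refine hlim.congr' ?_
  filter_upwards [eventually_gt_atTop 0] with k hk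
  simp only [Function.comp_apply, ← tsum_mul_left]
  refine tsum_congr fun j => ?_
  rw [inv_mul_rpow_neg_mul_add_one_rpow_neg (by positivity) (by exact_mod_cast hk),
    add_right_comm]

end Kernel

theorem Filter.Tendsto.sum_range_div_sum_range {u g : ℕ → ℝ} {L : ℝ}
    (h : Tendsto (fun k => u k / g k) atTop (𝓝 L)) (hg : ∀ k, 0 < g k)
    (hgsum : Tendsto (fun n => ∑ k ∈ range n, g k) atTop atTop) :
    Tendsto (fun n => (∑ k ∈ range n, u k) / ∑ k ∈ range n, g k) atTop (𝓝 L) := by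
  have herr : (fun k => u k - L * g k) =o[atTop] g := by
    rw [isLittleO_iff_tendsto' (.of_forall fun k hk => absurd hk (hg k).ne')]
    simpa [sub_div, mul_div_assoc, div_self (hg _).ne'] using h.sub_const L
  have := ((herr.sum_range (fun k => (hg k).le) hgsum).tendsto_div_nhds_zero).add_const L
  rw [zero_add] at this
  refine this.congr' ?_
  filter_upwards [hgsum.eventually_gt_atTop 0] with n hn
  rw [sum_sub_distrib, ← mul_sum, sub_div, mul_div_assoc, div_self hn.ne', mul_one, sub_add_cancel]

theorem tendsto_rpow_neg_mul_add_one_rpow_sub_rpow (p : ℝ) :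
    Tendsto (fun k : ℕ => (k : ℝ) ^ (-p) * (((k : ℝ) + 1) ^ (p + 1) - (k : ℝ) ^ (p + 1)))
      atTop (𝓝 (p + 1)) := by
  have hderiv : HasDerivAt (fun t : ℝ => (1 + t) ^ (p + 1)) (p + 1) 0 := by
    simpa using ((hasDerivAt_id (0 : ℝ)).const_add 1).rpow_const (p := p + 1) (by simp)
  refine (hderiv.tendsto_slope_zero_right.comp
    (tendsto_inv_atTop_nhdsGT_zero.comp tendsto_natCast_atTop_atTop)).congr' ?_
  filter_upwards [eventually_gt_atTop 0] with k hk
  have hk' : (0 : ℝ) < k := by exact_mod_cast hk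
  have hsplit : (k : ℝ) + 1 = k * (1 + (k : ℝ)⁻¹) := by field_simp
  simp only [Function.comp_apply, inv_inv, smul_eq_mul, add_zero, zero_add, one_rpow]
  rw [hsplit, mul_rpow hk'.le (by positivity), ← mul_sub_one, ← mul_assoc, ← rpow_add hk',
    neg_add_cancel_left, rpow_one]

theorem tendsto_sum_range_div_rpow {u : ℕ → ℝ} {p c : ℝ} (hp : -1 < p)
    (hu : Tendsto (fun k : ℕ => (k : ℝ) ^ (-p) * u k) atTop (𝓝 c)) :
    Tendsto (fun n : ℕ => (∑ k ∈ range n, u k) / (n : ℝ) ^ (p + 1)) atTop (𝓝 (c / (p + 1))) := by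
  set g : ℕ → ℝ := fun k => ((k : ℝ) + 1) ^ (p + 1) - (k : ℝ) ^ (p + 1)
  have hg (k : ℕ) : 0 < g k := sub_pos.2 (rpow_lt_rpow (by positivity) (by linarith) (by linarith))
  have hgsum (n : ℕ) : ∑ k ∈ range n, g k = (n : ℝ) ^ (p + 1) := by
    simpa [g, zero_rpow (by linarith : p + 1 ≠ 0)] using
      sum_range_sub (fun k => (k : ℝ) ^ (p + 1)) n
  have hratio : Tendsto (fun k => u k / g k) atTop (𝓝 (c / (p + 1))) := by
    refine (hu.div (tendsto_rpow_neg_mul_add_one_rpow_sub_rpow p) (by linarith)).congr' ?_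
    filter_upwards [eventually_gt_atTop 0] with k hk
    exact mul_div_mul_left _ _ (rpow_pos_of_pos (by exact_mod_cast hk) _).ne'
  simpa only [hgsum] using hratio.sum_range_div_sum_range hg
    (by simpa only [hgsum, Function.comp_def] using
      (tendsto_rpow_atTop (by linarith)).comp tendsto_natCast_atTop_atTop)

end

theorem stmt_8 (a b : ℝ) (ha : 1/2 < a) (ha1 : a < 1) (hb : 1/2 < b) (hb1 : b < 1) :
    Tendsto
      (fun n : ℕ =>
        (∑ k ∈ Finset.Ico 1 n,
            ∑' j : ℕ, ((j : ℝ) + 1) ^ (-a) * ((j : ℝ) + (k : ℝ) + 1) ^ (-b)) /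
          (n : ℝ) ^ (2 - (a + b)))
      atTop
      (nhds ((∫ x in Ioi (0:ℝ), x ^ (-a) * (x + 1) ^ (-b)) / (2 - (a + b)))) := by
  set S : ℕ → ℝ := fun k => ∑' j : ℕ, ((j : ℝ) + 1) ^ (-a) * ((j : ℝ) + (k : ℝ) + 1) ^ (-b)
  have hS := tendsto_rpow_mul_tsum_rpow_neg_mul_rpow_neg (by linarith) ha1 (by linarith)
    (by linarith)
  rw [← neg_sub] at hS
  have hsum := tendsto_sum_range_div_rpow (u := S) (by linarith) hS
  have hS0 : Tendsto (fun n : ℕ => S 0 / (n : ℝ) ^ (1 - (a + b) + 1)) atTop (nhds 0) :=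
    tendsto_const_nhds.div_atTop
      ((tendsto_rpow_atTop (by linarith)).comp tendsto_natCast_atTop_atTop)
  rw [show 2 - (a + b) = 1 - (a + b) + 1 by ring]
  have hlim := hsum.sub hS0
  rw [sub_zero] at hlim
  refine hlim.congr' ?_
  filter_upwards [eventually_gt_atTop 0] with n hn
  rw [← sub_div, Finset.sum_range_eq_add_Ico _ hn, add_sub_cancel_left]
end

section
/- Let a, b be reals with 1/2 < a < 1 and 1/2 < b < 1. Then Σ_{k=1}^{n−1} k·S(k) ~ [c(a,b)/(3−(a+b))] · n^(3−(a+b)) as n → ∞, where S(k) := Σ_{j=0}^∞ (j+1)^(−a)(j+k+1)^(−b) and c(a,b) := ∫₀^∞ x^(−a)(x+1)^(−b) dx. -/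
/-!
With `g x = x ^ (-a) * (x + 1) ^ (-b)`, the substitution `x ↦ x / k` turns `k ^ (a + b - 1) * S k`
into the right-endpoint Riemann sum `k⁻¹ * ∑ j, g ((j + 1) / k)` of the decreasing integrable
function `g` on `(0, ∞)`. Comparing each term with the integral of `g` over the adjacent cells
squeezes this sum between `∫ x in Ioi k⁻¹, g x` and `∫ x in Ioi 0, g x`, so
`k * S k ~ c(a,b) * k ^ p` with `p = 2 - (a + b) > 0`. Summing, and using
`∑ k < n, k ^ p ~ n ^ (p + 1) / (p + 1)` (compare with `∫ x in 0..n, x ^ p`), gives the claim.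
-/

open MeasureTheory Set Filter Topology Asymptotics

section RiemannSum

variable {g : ℝ → ℝ}

theorem tendsto_setIntegral_Ioi_nhdsGT_s9 {a : ℝ} (hg : IntegrableOn g (Ioi a)) :
    Tendsto (fun t => ∫ x in Ioi t, g x) (𝓝[>] a) (𝓝 (∫ x in Ioi a, g x)) := by
  have hcover := (aecover_Ioi_of_Ioi (μ := volume) (l := 𝓝[>] a) (a := id)
    nhdsWithin_le_nhds).integral_tendsto_of_countably_generated hg
  refine hcover.congr' ?_
  filter_upwards [self_mem_nhdsWithin] with t (ht : a < t)
  rw [Measure.restrict_restrict measurableSet_Ioi, Ioi_inter_Ioi, id, max_eq_left ht.le]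

theorem MeasureTheory.IntegrableOn.intervalIntegrable_of_Ioi {a x y : ℝ}
    (hg : IntegrableOn g (Ioi a)) (hx : a ≤ x) (hxy : x ≤ y) : IntervalIntegrable g volume x y :=
  (intervalIntegrable_iff_integrableOn_Ioc_of_le hxy).2 <|
    hg.mono_set fun _ ht => hx.trans_lt ht.1

theorem AntitoneOn.intervalIntegrable_of_Icc {x y : ℝ} (hg : AntitoneOn g (Icc x y))
    (hxy : x ≤ y) : IntervalIntegrable g volume x y := by
  rw [← uIcc_of_le hxy] at hg
  exact hg.intervalIntegrable

theorem AntitoneOn.mul_le_intervalIntegral {x y : ℝ} (hg : AntitoneOn g (Ioc x y)) (hxy : x ≤ y)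
    (hint : IntervalIntegrable g volume x y) : (y - x) * g y ≤ ∫ t in x..y, g t := by
  rw [intervalIntegral.integral_of_le hxy, ← Real.volume_real_Ioc_of_le hxy, mul_comm]
  exact setIntegral_ge_of_const_le_real measurableSet_Ioc (measure_Ioc_lt_top (μ := volume)).ne
    (fun t ht => hg ht (right_mem_Ioc.2 (ht.1.trans_le ht.2)) ht.2)
    ((intervalIntegrable_iff_integrableOn_Ioc_of_le hxy).1 hint)

theorem AntitoneOn.intervalIntegral_le_mul {x y : ℝ} (hg : AntitoneOn g (Icc x y)) (hxy : x ≤ y) :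
    ∫ t in x..y, g t ≤ (y - x) * g x := by
  rw [← smul_eq_mul, ← intervalIntegral.integral_const]
  exact intervalIntegral.integral_mono_on hxy (hg.intervalIntegrable_of_Icc hxy)
    intervalIntegrable_const fun t ht => hg (left_mem_Icc.2 hxy) ht ht.1

-- `AntitoneOn.sum_le_integral` would need `g` antitone on the closed `Icc 0 (N * h)`, which fails
-- when `g` blows up at `0`; hence the cell-by-cell comparison on `Ioc`.
theorem AntitoneOn.mul_sum_range_le_intervalIntegral (hg : AntitoneOn g (Ioi 0))
    (hint : IntegrableOn g (Ioi 0)) {h : ℝ} (hh : 0 ≤ h) (N : ℕ) :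
    h * ∑ j ∈ Finset.range N, g ((j + 1) * h) ≤ ∫ x in 0..N * h, g x := by
  have hcells := intervalIntegral.sum_integral_adjacent_intervals (a := fun k : ℕ => k * h)
    (n := N) fun k _ => hint.intervalIntegrable_of_Ioi (by positivity) (by push_cast; nlinarith)
  simp only [Nat.cast_zero, zero_mul, Nat.cast_succ] at hcells
  rw [← hcells, Finset.mul_sum]
  refine Finset.sum_le_sum fun j _ => ?_
  have hj : (j : ℝ) * h ≤ (j + 1) * h := by nlinarith
  have hcell := (hg.mono fun t ht => (by positivity : (0 : ℝ) ≤ j * h).trans_lt ht.1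
    ).mul_le_intervalIntegral hj (hint.intervalIntegrable_of_Ioi (by positivity) hj)
  rwa [show (j + 1 : ℝ) * h - j * h = h by ring] at hcell

theorem AntitoneOn.intervalIntegral_le_mul_sum_range (hg : AntitoneOn g (Ioi 0)) {h : ℝ}
    (hh : 0 < h) (N : ℕ) :
    ∫ x in h..(N + 1) * h, g x ≤ h * ∑ j ∈ Finset.range N, g ((j + 1) * h) := by
  have hcell_anti (j : ℕ) : AntitoneOn g (Icc ((j + 1) * h) ((j + 1 + 1) * h)) :=
    hg.mono fun t ht => (by positivity : (0 : ℝ) < (j + 1) * h).trans_le ht.1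
  have hj (j : ℕ) : ((j : ℝ) + 1) * h ≤ (j + 1 + 1) * h := by nlinarith
  have hcells := intervalIntegral.sum_integral_adjacent_intervals
    (a := fun k : ℕ => (k + 1) * h) (n := N) fun k _ => by
      simpa using (hcell_anti k).intervalIntegrable_of_Icc (hj k)
  simp only [Nat.cast_zero, zero_add, one_mul, Nat.cast_succ] at hcells
  rw [← hcells, Finset.mul_sum]
  refine Finset.sum_le_sum fun j _ => ?_
  have hcell := (hcell_anti j).intervalIntegral_le_mul (hj j)
  rwa [show (j + 1 + 1 : ℝ) * h - (j + 1) * h = h by ring] at hcell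

theorem AntitoneOn.tendsto_mul_tsum_nhdsGT_zero (hg : AntitoneOn g (Ioi 0))
    (hint : IntegrableOn g (Ioi 0)) (hnonneg : ∀ x ∈ Ioi 0, 0 ≤ g x) :
    Tendsto (fun h => h * ∑' j : ℕ, g ((j + 1) * h)) (𝓝[>] 0) (𝓝 (∫ x in Ioi 0, g x)) := by
  set c := ∫ x in Ioi 0, g x
  have hterm_nonneg {h : ℝ} (hh : 0 < h) (j : ℕ) : 0 ≤ g ((j + 1) * h) :=
    hnonneg _ (show (0 : ℝ) < (j + 1) * h by positivity)
  have hpartial_le {h : ℝ} (hh : 0 < h) (N : ℕ) :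
      ∑ j ∈ Finset.range N, g ((j + 1) * h) ≤ c / h := by
    rw [le_div_iff₀' hh]
    refine (hg.mul_sum_range_le_intervalIntegral hint hh.le N).trans ?_
    rw [intervalIntegral.integral_of_le (by positivity)]
    exact setIntegral_mono_set hint (ae_restrict_of_forall_mem measurableSet_Ioi hnonneg)
      (Ioc_subset_Ioi_self.eventuallyLE)
  have hupper {h : ℝ} (hh : 0 < h) : h * ∑' j : ℕ, g ((j + 1) * h) ≤ c := by
    rw [← le_div_iff₀' hh]
    exact Real.tsum_le_of_sum_range_le (hterm_nonneg hh) (hpartial_le hh)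
  have hlower {h : ℝ} (hh : 0 < h) : ∫ x in Ioi h, g x ≤ h * ∑' j : ℕ, g ((j + 1) * h) := by
    have hsum : Summable fun j : ℕ => g ((j + 1) * h) :=
      summable_of_sum_range_le (hterm_nonneg hh) (hpartial_le hh)
    have hend : Tendsto (fun N : ℕ => (N + 1) * h) atTop atTop :=
      (tendsto_natCast_atTop_atTop.atTop_add tendsto_const_nhds).atTop_mul_const hh
    refine le_of_tendsto (intervalIntegral_tendsto_integral_Ioi h
      (hint.mono_set (Ioi_subset_Ioi hh.le)) hend) (Eventually.of_forall fun N => ?_)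
    exact (hg.intervalIntegral_le_mul_sum_range hh N).trans <|
      mul_le_mul_of_nonneg_left (hsum.sum_le_tsum _ fun j _ => hterm_nonneg hh j) hh.le
  refine tendsto_of_tendsto_of_tendsto_of_le_of_le' (tendsto_setIntegral_Ioi_nhdsGT_s9 hint)
    tendsto_const_nhds ?_ ?_
  · filter_upwards [self_mem_nhdsWithin] with h hh using hlower hh
  · filter_upwards [self_mem_nhdsWithin] with h hh using hupper hh

end RiemannSum

theorem tendsto_sum_range_rpow_div_rpow {p : ℝ} (hp : 0 < p) :
    Tendsto (fun n : ℕ => (∑ k ∈ Finset.range n, (k : ℝ) ^ p) / (n : ℝ) ^ (p + 1)) atTop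
      (𝓝 (1 / (p + 1))) := by
  have hmono (n : ℕ) : MonotoneOn (fun x : ℝ => x ^ p) (Icc 0 (0 + n)) :=
    fun x hx _ _ hxy => Real.rpow_le_rpow hx.1 hxy hp.le
  have hintegral (n : ℕ) : ∫ x in (0 : ℝ)..n, x ^ p = (n : ℝ) ^ (p + 1) / (p + 1) := by
    rw [integral_rpow (Or.inl (by linarith)), Real.zero_rpow (by linarith), sub_zero]
  have hupper (n : ℕ) : ∑ k ∈ Finset.range n, (k : ℝ) ^ p ≤ (n : ℝ) ^ (p + 1) / (p + 1) := by
    simpa [hintegral] using (hmono n).sum_le_integral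
  have hlower (n : ℕ) :
      (n : ℝ) ^ (p + 1) / (p + 1) ≤ ∑ k ∈ Finset.range n, (k : ℝ) ^ p + (n : ℝ) ^ p := by
    have hshift := Finset.sum_range_succ' (fun k : ℕ => (k : ℝ) ^ p) n
    rw [Finset.sum_range_succ, Nat.cast_zero, Real.zero_rpow hp.ne', add_zero] at hshift
    push_cast at hshift
    simpa [hintegral, ← hshift] using (hmono n).integral_le_sum
  refine tendsto_of_tendsto_of_tendsto_of_le_of_le'
    (g := fun n : ℕ => 1 / (p + 1) - (n : ℝ)⁻¹) ?_ tendsto_const_nhds ?_ ?_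
  · simpa using tendsto_const_nhds.sub
      (tendsto_inv_atTop_zero.comp (tendsto_natCast_atTop_atTop (R := ℝ)))
  · filter_upwards [eventually_gt_atTop 0] with n hn
    have hn : (0 : ℝ) < n := Nat.cast_pos.2 hn
    have hnp : (n : ℝ) ^ (p + 1) = (n : ℝ) ^ p * n := Real.rpow_add_one hn.ne' p
    rw [sub_le_iff_le_add]
    calc 1 / (p + 1) = (n : ℝ) ^ (p + 1) / (p + 1) / (n : ℝ) ^ (p + 1) := by
          field_simp
      _ ≤ (∑ k ∈ Finset.range n, (k : ℝ) ^ p + (n : ℝ) ^ p) / (n : ℝ) ^ (p + 1) := by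
          gcongr
          exact hlower n
      _ = _ := by rw [add_div, hnp, div_mul_cancel_left₀ (by positivity)]
  · filter_upwards [eventually_gt_atTop 0] with n hn
    rw [div_le_iff₀ (by positivity), one_div_mul_eq_div]
    exact hupper n

theorem Filter.Tendsto.sum_range_div_rpow {u : ℕ → ℝ} {c p : ℝ} (hp : 0 < p)
    (hu : Tendsto (fun k : ℕ => u k / (k : ℝ) ^ p) atTop (𝓝 c)) :
    Tendsto (fun n : ℕ => (∑ k ∈ Finset.range n, u k) / (n : ℝ) ^ (p + 1)) atTop
      (𝓝 (c / (p + 1))) := by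
  set v : ℕ → ℝ := fun n => ∑ k ∈ Finset.range n, (k : ℝ) ^ p
  have hv := tendsto_sum_range_rpow_div_rpow hp
  have hpow_ne {q : ℝ} : ∀ᶠ n : ℕ in atTop, (n : ℝ) ^ q ≠ 0 := by
    filter_upwards [eventually_gt_atTop 0] with n hn using by positivity
  have hv_bigO : v =O[atTop] fun n : ℕ => (n : ℝ) ^ (p + 1) :=
    isBigO_of_div_tendsto_nhds (hpow_ne.mono fun n hn h0 => absurd h0 hn) _ hv
  have hv_top : Tendsto v atTop atTop := by
    refine (hv.pos_mul_atTop (by positivity) ((tendsto_rpow_atTop (by linarith : 0 < p + 1)).comp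
      tendsto_natCast_atTop_atTop)).congr' ?_
    filter_upwards [hpow_ne] with n hn using div_mul_cancel₀ _ hn
  have herror : (fun k : ℕ => u k - c * (k : ℝ) ^ p) =o[atTop] fun k : ℕ => (k : ℝ) ^ p := by
    refine (isLittleO_iff_tendsto' (hpow_ne.mono fun k hk h0 => absurd h0 hk)).2 ?_
    have hu' : Tendsto (fun k : ℕ => u k / (k : ℝ) ^ p - c) atTop (𝓝 0) := by
      simpa using hu.sub_const c
    refine hu'.congr' ?_
    filter_upwards [hpow_ne] with k hk
    rw [sub_div, mul_div_cancel_right₀ _ hk]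
  have herror_sum : Tendsto (fun n : ℕ => (∑ k ∈ Finset.range n, (u k - c * (k : ℝ) ^ p)) /
      (n : ℝ) ^ (p + 1)) atTop (𝓝 0) :=
    ((herror.sum_range (fun k => by positivity) hv_top).trans_isBigO hv_bigO).tendsto_div_nhds_zero
  have hsplit (n : ℕ) : (∑ k ∈ Finset.range n, u k) / (n : ℝ) ^ (p + 1) =
      (∑ k ∈ Finset.range n, (u k - c * (k : ℝ) ^ p)) / (n : ℝ) ^ (p + 1) +
        c * (v n / (n : ℝ) ^ (p + 1)) := by
    rw [Finset.sum_sub_distrib, ← Finset.mul_sum]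
    ring
  simpa [hsplit, div_eq_mul_one_div c] using herror_sum.add (hv.const_mul c)

section PowerKernel

variable {a b : ℝ}

noncomputable def powKernel (a b x : ℝ) : ℝ := x ^ (-a) * (x + 1) ^ (-b)

theorem powKernel_nonneg {x : ℝ} (hx : 0 ≤ x) : 0 ≤ powKernel a b x := by
  unfold powKernel
  positivity

theorem antitoneOn_powKernel (ha : 0 ≤ a) (hb : 0 ≤ b) : AntitoneOn (powKernel a b) (Ioi 0) :=
  fun x hx y _ hxy => mul_le_mul (Real.rpow_le_rpow_of_nonpos hx hxy (by linarith))
    (Real.rpow_le_rpow_of_nonpos (by linarith [mem_Ioi.1 hx]) (by linarith) (by linarith))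
    (Real.rpow_nonneg (by linarith [mem_Ioi.1 hx]) _) (Real.rpow_nonneg (le_of_lt hx) _)

theorem integrableOn_powKernel (ha : 0 < a) (ha1 : a < 1) (hab : 1 < a + b) :
    IntegrableOn (powKernel a b) (Ioi 0) := by
  have hb : 0 ≤ b := by linarith
  have hmeas : AEStronglyMeasurable (powKernel a b) volume := by
    unfold powKernel
    fun_prop
  have hnear : IntegrableOn (powKernel a b) (Ioc 0 1) := by
    have hdom : IntegrableOn (fun x : ℝ => x ^ (-a)) (Ioc 0 1) :=
      (intervalIntegrable_iff_integrableOn_Ioc_of_le zero_le_one).1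
        (intervalIntegral.intervalIntegrable_rpow' (by linarith))
    refine hdom.mono' hmeas.restrict ((ae_restrict_mem measurableSet_Ioc).mono fun x hx => ?_)
    rw [Real.norm_of_nonneg (powKernel_nonneg hx.1.le)]
    exact mul_le_of_le_one_right (by have := hx.1; positivity)
      (Real.rpow_le_one_of_one_le_of_nonpos (by linarith [hx.1]) (by linarith))
  have hfar : IntegrableOn (powKernel a b) (Ioi 1) := by
    have hdom : IntegrableOn (fun x : ℝ => x ^ (-(a + b))) (Ioi 1) :=
      integrableOn_Ioi_rpow_of_lt (by linarith) one_pos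
    refine hdom.mono' hmeas.restrict ((ae_restrict_mem measurableSet_Ioi).mono fun x hx => ?_)
    have hx0 : (0 : ℝ) < x := one_pos.trans hx
    rw [Real.norm_of_nonneg (powKernel_nonneg hx0.le), neg_add, Real.rpow_add hx0]
    exact mul_le_mul_of_nonneg_left
      (Real.rpow_le_rpow_of_nonpos hx0 (by linarith) (by linarith)) (by positivity)
  simpa only [Ioc_union_Ioi_eq_Ioi zero_le_one] using hnear.union hfar

theorem powKernel_mul_inv {k x : ℝ} (hk : 0 < k) (hx : 0 ≤ x) :
    powKernel a b (x * k⁻¹) = k ^ (a + b) * (x ^ (-a) * (x + k) ^ (-b)) := by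
  rw [powKernel, show x * k⁻¹ + 1 = (x + k) * k⁻¹ by field_simp, Real.mul_rpow hx (by positivity),
    Real.mul_rpow (by positivity) (by positivity), Real.inv_rpow hk.le, Real.inv_rpow hk.le,
    Real.rpow_neg hk.le, Real.rpow_neg hk.le, inv_inv, inv_inv, Real.rpow_add hk]
  ring

end PowerKernel

theorem stmt_9 (a b : ℝ) (ha : 1/2 < a) (ha1 : a < 1) (hb : 1/2 < b) (hb1 : b < 1) :
    Tendsto
      (fun n : ℕ =>
        (∑ k ∈ Finset.Ico 1 n,
            (k : ℝ) *
              ∑' j : ℕ, ((j : ℝ) + 1) ^ (-a) * ((j : ℝ) + (k : ℝ) + 1) ^ (-b)) /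
          (n : ℝ) ^ (3 - (a + b)))
      atTop
      (nhds ((∫ x in Ioi (0:ℝ), x ^ (-a) * (x + 1) ^ (-b)) / (3 - (a + b)))) := by
  set S : ℕ → ℝ := fun k => ∑' j : ℕ, ((j : ℝ) + 1) ^ (-a) * ((j : ℝ) + (k : ℝ) + 1) ^ (-b)
  have hriemann := (antitoneOn_powKernel (a := a) (b := b) (by linarith) (by linarith)
    ).tendsto_mul_tsum_nhdsGT_zero (integrableOn_powKernel (by linarith) ha1 (by linarith))
      fun x hx => powKernel_nonneg (le_of_lt hx)
  have hrescale (k : ℕ) (hk : 0 < (k : ℝ)) :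
      (k : ℝ)⁻¹ * ∑' j : ℕ, powKernel a b ((j + 1) * (k : ℝ)⁻¹) =
        k * S k / (k : ℝ) ^ (2 - (a + b)) := by
    simp only [S, powKernel_mul_inv hk (Nat.cast_add_one_pos _).le, tsum_mul_left,
      add_right_comm _ (1 : ℝ) (k : ℝ), Real.rpow_sub hk, Real.rpow_two]
    field_simp
  have hkS : Tendsto (fun k : ℕ => (k : ℝ) * S k / (k : ℝ) ^ (2 - (a + b))) atTop
      (𝓝 (∫ x in Ioi (0:ℝ), x ^ (-a) * (x + 1) ^ (-b))) := by
    have hstep : Tendsto (fun k : ℕ => (k : ℝ)⁻¹) atTop (𝓝[>] 0) :=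
      tendsto_inv_atTop_nhdsGT_zero.comp tendsto_natCast_atTop_atTop
    refine (hriemann.comp hstep).congr' ?_
    filter_upwards [eventually_gt_atTop 0] with k hk
    exact hrescale k (Nat.cast_pos.2 hk)
  have hces := hkS.sum_range_div_rpow (by linarith : 0 < 2 - (a + b))
  rw [show 2 - (a + b) + 1 = 3 - (a + b) by ring] at hces
  refine hces.congr' ?_
  filter_upwards [eventually_gt_atTop 0] with n hn
  rw [Finset.sum_range_eq_add_Ico _ hn, Nat.cast_zero, zero_mul, zero_add]
end

section
/- For a real d with 1/2 < d < 1, lim_{n→∞} n^(−(3−2d)) Σ_{j=1}^∞ (Σ_{k=1}^n (k+j)^(−d))² = ∫₀^∞ (∫₀^1 (s+u)^(−d) ds)² du, and this double integral is finite. -/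
/-!
Write `F u = rpowWindow d u = ∫₀¹ (s + u)^(-d) ds`. Comparing the antitone function
`x ↦ (x + j + 1)^(-d)` with its integral over `[0, n]` gives
`Σₖ (k + j + 1)^(-d) = n^(1-d) F((j+1)/n) + O((j+1)^(-d))`, so after normalisation the series is
`(1/n) Σⱼ F((j+1)/n)²` up to an error `O(n^(2d-2) Σⱼ (j+1)^(-2d))`, which vanishes because
`2d > 1`. The main term is a Riemann sum of the antitone integrable function `F²` on `(0, ∞)`,
and the integral test sandwiches it between `∫_{1/n}^∞ F²` and `∫_0^∞ F²`.
-/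

open MeasureTheory Set Filter Topology

namespace AntitoneOn

variable {f : ℝ → ℝ}

theorem riemann_sum_bounds_Ioi (anti : AntitoneOn f (Ici 0))
    (integrable : IntegrableOn f (Ioi 0)) (nonneg : ∀ t ∈ Ioi 0, 0 ≤ f t) {n : ℕ} (hn : 0 < n) :
    Summable (fun j : ℕ => f ((j + 1) / n)) ∧
      ∫ x in Ioi (n : ℝ)⁻¹, f x ≤ (∑' j : ℕ, f ((j + 1) / n)) / n ∧
      (∑' j : ℕ, f ((j + 1) / n)) / n ≤ ∫ x in Ioi 0, f x := by
  have hh : 0 < (n : ℝ)⁻¹ := inv_pos.2 (Nat.cast_pos.2 hn)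
  set g : ℝ → ℝ := fun x => f ((n : ℝ)⁻¹ * x)
  have anti_g : AntitoneOn g (Ici 0) := fun x hx y hy hxy =>
    anti (mul_nonneg hh.le hx) (mul_nonneg hh.le hy) (mul_le_mul_of_nonneg_left hxy hh.le)
  have nonneg_g : ∀ t ∈ Ioi 0, 0 ≤ g t := fun t ht => nonneg _ (mul_pos hh ht)
  have integrable_g : IntegrableOn g (Ioi 0) :=
    (integrableOn_Ioi_comp_mul_left_iff f 0 hh).2 (by simpa using integrable)
  have summable_g := anti_g.summable_of_integrableOn_Ioi_zero integrable_g nonneg_g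
  have integral_g (a : ℝ) : ∫ x in Ioi a, g x = n * ∫ x in Ioi ((n : ℝ)⁻¹ * a), f x := by
    rw [integral_comp_mul_left_Ioi f a hh, inv_inv, smul_eq_mul]
  have upper := anti_g.tsum_add_one_le_integral integrable_g nonneg_g
  have lower := AntitoneOn.integral_le_tsum_comp_add 1 (anti_g.mono (by simp)) summable_g
    fun t ht => nonneg_g t (lt_trans one_pos (by simpa using ht))
  push_cast at upper lower
  rw [integral_g, mul_zero] at upper
  rw [integral_g, mul_one] at lower
  simp only [g, inv_mul_eq_div] at upper lower summable_g
  refine ⟨(summable_nat_add_iff 1).2 summable_g |>.congr fun j => by simp, ?_, ?_⟩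
  · rwa [le_div_iff₀ (by positivity), mul_comm]
  · rwa [div_le_iff₀ (by positivity), mul_comm]

theorem tendsto_riemann_sum_integral_Ioi (anti : AntitoneOn f (Ici 0))
    (integrable : IntegrableOn f (Ioi 0)) (nonneg : ∀ t ∈ Ioi 0, 0 ≤ f t) :
    Tendsto (fun n : ℕ => (∑' j : ℕ, f ((j + 1) / n)) / n) atTop (𝓝 (∫ x in Ioi 0, f x)) := by
  have tail : Tendsto (fun n : ℕ => ∫ x in Ioi (n : ℝ)⁻¹, f x) atTop (𝓝 (∫ x in Ioi 0, f x)) := by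
    refine ((integrable.continuousOn_Ici_primitive_Ioi 0 self_mem_Ici).tendsto).comp ?_
    exact tendsto_nhdsWithin_iff.2 ⟨tendsto_inv_atTop_nhds_zero_nat,
      Eventually.of_forall fun n => mem_Ici.2 (inv_nonneg.2 n.cast_nonneg)⟩
  refine tendsto_of_tendsto_of_tendsto_of_le_of_le' tail tendsto_const_nhds ?_ ?_ <;>
    filter_upwards [eventually_gt_atTop 0] with n hn
  · exact (anti.riemann_sum_bounds_Ioi integrable nonneg hn).2.1
  · exact (anti.riemann_sum_bounds_Ioi integrable nonneg hn).2.2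

theorem sum_Icc_le_integral {n : ℕ} (anti : AntitoneOn f (Icc 0 n)) :
    ∑ k ∈ Finset.Icc 1 n, f k ≤ ∫ x in (0:ℝ)..n, f x := by
  have h := AntitoneOn.sum_le_integral_Ico (f := f) (a := 0) (Nat.zero_le n) (by simpa using anti)
  rw [Finset.sum_Ico_add' (fun k : ℕ => f k), Finset.Ico_add_one_right_eq_Icc] at h
  exact_mod_cast h

theorem integral_le_add_sum_Icc {n : ℕ} (anti : AntitoneOn f (Icc 0 n)) (hn : 0 ≤ f n) :
    ∫ x in (0:ℝ)..n, f x ≤ f 0 + ∑ k ∈ Finset.Icc 1 n, f k := by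
  have h := AntitoneOn.integral_le_sum_Ico (f := f) (a := 0) (Nat.zero_le n) (by simpa using anti)
  have split := (Finset.sum_Ico_succ_top (Nat.zero_le n) fun k : ℕ => f k).symm.trans
    (Finset.sum_eq_sum_Ico_succ_bot (Nat.succ_pos n) fun k : ℕ => f k)
  rw [zero_add, Nat.succ_eq_add_one, Finset.Ico_add_one_right_eq_Icc] at split
  push_cast at h split
  linarith

end AntitoneOn

theorem summable_nat_add_one_rpow {p : ℝ} (hp : p < -1) :
    Summable fun j : ℕ => ((j : ℝ) + 1) ^ p := by
  simpa using (summable_nat_add_iff 1).2 (Real.summable_nat_rpow.2 hp)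

noncomputable def rpowWindow (d u : ℝ) : ℝ := ∫ s in (0:ℝ)..1, (s + u) ^ (-d)

section rpowWindow

variable {d : ℝ}

theorem intervalIntegrable_rpow_add (hd1 : d < 1) (u a b : ℝ) :
    IntervalIntegrable (fun s => (s + u) ^ (-d)) volume a b := by
  simpa using (intervalIntegral.intervalIntegrable_rpow' (a := a + u) (b := b + u)
    (neg_lt_neg hd1)).comp_add_right u

theorem rpowWindow_nonneg (u : ℝ) (hu : 0 ≤ u) : 0 ≤ rpowWindow d u :=
  intervalIntegral.integral_nonneg zero_le_one fun s hs => Real.rpow_nonneg (by linarith [hs.1]) _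

theorem antitoneOn_rpowWindow (hd0 : 0 ≤ d) (hd1 : d < 1) : AntitoneOn (rpowWindow d) (Ici 0) :=
  fun u hu v _ huv => intervalIntegral.integral_mono_on_of_le_Ioo zero_le_one
    (intervalIntegrable_rpow_add hd1 v 0 1) (intervalIntegrable_rpow_add hd1 u 0 1)
    fun s hs => Real.rpow_le_rpow_of_nonpos (by linarith [hs.1, mem_Ici.1 hu]) (by linarith)
      (by linarith)

theorem rpowWindow_le_rpow (hd0 : 0 ≤ d) (hd1 : d < 1) {u : ℝ} (hu : 0 < u) :
    rpowWindow d u ≤ u ^ (-d) := by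
  simpa [rpowWindow] using intervalIntegral.integral_mono_on zero_le_one
    (intervalIntegrable_rpow_add hd1 u 0 1) intervalIntegrable_const fun s hs =>
      Real.rpow_le_rpow_of_nonpos hu (by linarith [hs.1]) (neg_nonpos.2 hd0)

theorem integral_rpow_add_eq_rpowWindow {n c : ℝ} (hn : 0 < n) (hc : 0 ≤ c) :
    ∫ x in (0:ℝ)..n, (x + c) ^ (-d) = n ^ (1 - d) * rpowWindow d (c / n) := by
  have scale : ∀ s ∈ uIcc (0:ℝ) 1, (n * s + c) ^ (-d) = n ^ (-d) * (s + c / n) ^ (-d) := by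
    intro s hs
    rw [uIcc_of_le zero_le_one] at hs
    rw [← Real.mul_rpow hn.le (by have := hs.1; positivity), mul_add, mul_div_cancel₀ _ hn.ne']
  have := intervalIntegral.integral_comp_mul_left (fun x => (x + c) ^ (-d)) hn.ne' (a := 0) (b := 1)
  rw [intervalIntegral.integral_congr scale, intervalIntegral.integral_const_mul, mul_zero,
    mul_one] at this
  rw [rpowWindow, sub_eq_add_neg, Real.rpow_add hn, Real.rpow_one, mul_assoc, this, smul_eq_mul,
    ← mul_assoc, mul_inv_cancel₀ hn.ne', one_mul]

theorem antitoneOn_rpowWindow_sq (hd0 : 0 ≤ d) (hd1 : d < 1) :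
    AntitoneOn (fun u => rpowWindow d u ^ 2) (Ici 0) :=
  fun _ hu _ hv huv => pow_le_pow_left₀ (rpowWindow_nonneg _ hv)
    (antitoneOn_rpowWindow hd0 hd1 hu hv huv) 2

theorem integrableOn_rpowWindow_sq (hd : 1 / 2 < d) (hd1 : d < 1) :
    IntegrableOn (fun u => rpowWindow d u ^ 2) (Ioi 0) := by
  have hd0 : 0 ≤ d := by linarith
  refine (antitoneOn_rpowWindow_sq hd0 hd1).integrableOn_Ioi_zero_of_summable ?_
    fun _ _ => sq_nonneg _
  refine (summable_nat_add_iff 1).1 <| (summable_nat_add_one_rpow (p := -(2 * d)) (by linarith))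
    |>.of_nonneg_of_le (fun _ => sq_nonneg _) fun j => ?_
  have hj : (0 : ℝ) < j + 1 := by positivity
  calc rpowWindow d ((j + 1 : ℕ) : ℝ) ^ 2 ≤ (((j : ℝ) + 1) ^ (-d)) ^ 2 := by
        push_cast
        exact pow_le_pow_left₀ (rpowWindow_nonneg _ hj.le) (rpowWindow_le_rpow hd0 hd1 hj) 2
    _ = ((j : ℝ) + 1) ^ (-(2 * d)) := by
        rw [← Real.rpow_mul_natCast hj.le]
        ring_nf

theorem sum_Icc_rpow_add_mem_Icc (hd0 : 0 ≤ d) {c : ℝ} (hc : 0 < c) {n : ℕ} (hn : 0 < n) :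
    ∑ k ∈ Finset.Icc 1 n, ((k : ℝ) + c) ^ (-d) ∈
      Icc ((n : ℝ) ^ (1 - d) * rpowWindow d (c / n) - c ^ (-d))
        ((n : ℝ) ^ (1 - d) * rpowWindow d (c / n)) := by
  have hN : (0 : ℝ) < n := Nat.cast_pos.2 hn
  have anti : AntitoneOn (fun x => (x + c) ^ (-d)) (Icc 0 n) := fun x hx y _ hxy =>
    Real.rpow_le_rpow_of_nonpos (by linarith [hx.1]) (by linarith) (neg_nonpos.2 hd0)
  have hI := integral_rpow_add_eq_rpowWindow (d := d) hN hc.le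
  have upper := anti.integral_le_add_sum_Icc (by positivity)
  rw [hI, zero_add] at upper
  exact ⟨by linarith, hI ▸ anti.sum_Icc_le_integral⟩

theorem rpow_mul_rpowWindow_div_le (hd0 : 0 ≤ d) (hd1 : d < 1) {c N : ℝ} (hc : 0 < c)
    (hN : 0 < N) : N ^ (1 - d) * rpowWindow d (c / N) ≤ N * c ^ (-d) := by
  have hscale : N ^ (1 - d) * (c / N) ^ (-d) = N * c ^ (-d) := by
    rw [Real.div_rpow hc.le hN.le, Real.rpow_neg hN.le, div_inv_eq_mul, mul_left_comm,
      ← Real.rpow_add hN]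
    norm_num [mul_comm]
  exact hscale ▸ mul_le_mul_of_nonneg_left (rpowWindow_le_rpow hd0 hd1 (by positivity))
    (Real.rpow_nonneg hN.le _)

theorem sq_sum_Icc_rpow_add_div_mem_Icc (hd0 : 0 ≤ d) (hd1 : d < 1) {c : ℝ} (hc : 0 < c)
    {n : ℕ} (hn : 0 < n) :
    (∑ k ∈ Finset.Icc 1 n, ((k : ℝ) + c) ^ (-d)) ^ 2 / (n : ℝ) ^ (3 - 2 * d) ∈
      Icc (rpowWindow d (c / n) ^ 2 / n - 2 * c ^ (-(2 * d)) * (n : ℝ) ^ (2 * d - 2))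
        (rpowWindow d (c / n) ^ 2 / n) := by
  obtain ⟨le_sum, sum_le⟩ := sum_Icc_rpow_add_mem_Icc hd0 hc hn
  set N : ℝ := (n : ℝ)
  have hN : 0 < N := Nat.cast_pos.2 hn
  have hpow3 : N ^ (3 - 2 * d) = N * (N ^ (1 - d)) ^ 2 := by
    rw [← Real.rpow_mul_natCast hN.le, ← Real.rpow_one_add' hN.le (by norm_num; linarith)]
    ring_nf
  have hpow2 : N ^ (2 * d - 2) = ((N ^ (1 - d)) ^ 2)⁻¹ := by
    rw [← Real.rpow_mul_natCast hN.le, ← Real.rpow_neg hN.le]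
    ring_nf
  have hε2 : c ^ (-(2 * d)) = (c ^ (-d)) ^ 2 := by
    rw [← Real.rpow_mul_natCast hc.le]
    ring_nf
  set S := ∑ k ∈ Finset.Icc 1 n, ((k : ℝ) + c) ^ (-d)
  set φ := rpowWindow d (c / N)
  set ε := c ^ (-d)
  set b := N ^ (1 - d)
  have hb : 0 < b := Real.rpow_pos_of_pos hN _
  have hS : 0 ≤ S := Finset.sum_nonneg fun k _ => by positivity
  have hφ : 0 ≤ φ := rpowWindow_nonneg _ (by positivity)
  have hφ_le : b * φ ≤ N * ε := rpow_mul_rpowWindow_div_le hd0 hd1 hc hN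
  -- `(bφ)² - S² = (bφ - S)(bφ + S) ≤ ε · 2Nε`
  have hsq : (b * φ) ^ 2 ≤ S ^ 2 + 2 * N * ε ^ 2 := by
    nlinarith [mul_le_mul (sub_le_comm.1 le_sum) (add_le_add hφ_le (sum_le.trans hφ_le))
      (by positivity : 0 ≤ b * φ + S) (by positivity : 0 ≤ ε)]
  have hφ_eq : φ ^ 2 / N = (b * φ) ^ 2 / (N * b ^ 2) := by field_simp
  rw [hpow3, hpow2, hε2, hφ_eq]
  constructor
  · calc (b * φ) ^ 2 / (N * b ^ 2) - 2 * ε ^ 2 * (b ^ 2)⁻¹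
        = ((b * φ) ^ 2 - 2 * N * ε ^ 2) / (N * b ^ 2) := by field_simp
      _ ≤ S ^ 2 / (N * b ^ 2) := by gcongr; linarith
  · gcongr

theorem tsum_sq_sum_Icc_rpow_div_mem_Icc (hd : 1 / 2 < d) (hd1 : d < 1) {n : ℕ} (hn : 0 < n) :
    (∑' j : ℕ, (∑ k ∈ Finset.Icc 1 n, ((k : ℝ) + (j : ℝ) + 1) ^ (-d)) ^ 2) /
        (n : ℝ) ^ (3 - 2 * d) ∈
      Icc ((∑' j : ℕ, rpowWindow d ((j + 1) / n) ^ 2) / n -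
          2 * (∑' j : ℕ, ((j : ℝ) + 1) ^ (-(2 * d))) * (n : ℝ) ^ (2 * d - 2))
        ((∑' j : ℕ, rpowWindow d ((j + 1) / n) ^ 2) / n) := by
  have hd0 : 0 ≤ d := by linarith
  set A : ℕ → ℝ := fun j => rpowWindow d ((j + 1) / n) ^ 2 / n
  set B : ℕ → ℝ := fun j =>
    (∑ k ∈ Finset.Icc 1 n, ((k : ℝ) + (j : ℝ) + 1) ^ (-d)) ^ 2 / (n : ℝ) ^ (3 - 2 * d)
  set E : ℕ → ℝ := fun j => 2 * ((j : ℝ) + 1) ^ (-(2 * d)) * (n : ℝ) ^ (2 * d - 2)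
  have hBA (j : ℕ) : B j ∈ Icc (A j - E j) (A j) := by
    simpa only [B, A, E, add_assoc] using
      sq_sum_Icc_rpow_add_div_mem_Icc hd0 hd1 (c := (j : ℝ) + 1) (by positivity) hn
  have hA : Summable A :=
    ((antitoneOn_rpowWindow_sq hd0 hd1).riemann_sum_bounds_Ioi (integrableOn_rpowWindow_sq hd hd1)
      (fun _ _ => sq_nonneg _) hn).1.div_const _
  have hB : Summable B :=
    hA.of_nonneg_of_le (fun _ => div_nonneg (sq_nonneg _) (by positivity)) fun j => (hBA j).2
  have hE : Summable E :=
    ((summable_nat_add_one_rpow (by linarith)).mul_left 2).mul_right _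
  rw [← tsum_div_const, ← tsum_div_const, ← tsum_mul_left, ← tsum_mul_right,
    ← hA.tsum_sub hE]
  exact ⟨hA.sub hE |>.tsum_le_tsum (fun j => (hBA j).1) hB,
    hB.tsum_le_tsum (fun j => (hBA j).2) hA⟩

end rpowWindow

theorem stmt_12 (d : ℝ) (hd : 1/2 < d) (hd1 : d < 1) :
    IntegrableOn
      (fun u : ℝ => (∫ s in (0:ℝ)..1, (s + u) ^ (-d)) ^ 2) (Ioi 0) volume ∧
    Tendsto
      (fun n : ℕ =>
        (∑' j : ℕ, (∑ k ∈ Finset.Icc 1 n, ((k : ℝ) + (j : ℝ) + 1) ^ (-d)) ^ 2) /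
          (n : ℝ) ^ (3 - 2 * d))
      atTop
      (nhds (∫ u in Ioi (0:ℝ), (∫ s in (0:ℝ)..1, (s + u) ^ (-d)) ^ 2)) := by
  have integrable := integrableOn_rpowWindow_sq hd hd1
  have riemann := (antitoneOn_rpowWindow_sq (by linarith) hd1).tendsto_riemann_sum_integral_Ioi
    integrable fun _ _ => sq_nonneg _
  have error : Tendsto (fun n : ℕ => 2 * (∑' j : ℕ, ((j : ℝ) + 1) ^ (-(2 * d))) *
      (n : ℝ) ^ (2 * d - 2)) atTop (𝓝 0) := by
    simpa using ((tendsto_rpow_neg_atTop (y := 2 - 2 * d) (by linarith)).comp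
      tendsto_natCast_atTop_atTop).const_mul _
  refine ⟨integrable, ?_⟩
  change Tendsto _ atTop (𝓝 (∫ u in Ioi 0, rpowWindow d u ^ 2))
  refine tendsto_of_tendsto_of_tendsto_of_le_of_le' (by simpa using riemann.sub error) riemann
    ?_ ?_ <;> filter_upwards [eventually_gt_atTop 0] with n hn
  · exact (tsum_sq_sum_Icc_rpow_div_mem_Icc hd hd1 hn).1
  · exact (tsum_sq_sum_Icc_rpow_div_mem_Icc hd hd1 hn).2
end
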